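/- Let n : ℕ, A, M : Matrix (Fin n) (Fin n) ℝ, v : Fin n → ℝ, θ : ℝ, and let π be a permutation of Fin n with permutation matrix P(π). Then for every d : ℕ and every i : Fin n, ((((P(π) * A * P(π)ᵀ)^d) ∘ (P(π) * M * P(π)ᵀ)) *ᵥ (P(π) *ᵥ v)) i > θ if and only if ((A^d ∘ M) *ᵥ v) (π i) > θ. That is, the vertex-labeling split criterion of TREE-G is permutation-equivariant: the criterion holds at vertex i of the relabeled graph exactly when it holds at vertex π i of the original graph (Lemma 4.1, vertex-labeling case). -/
import Mathlib


open Matrix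

/-- The permutation matrix of `π`: `P(π) i j = 1` if `j = π i` and `0` otherwise. -/
def permMatrix {n : ℕ} (π : Equiv.Perm (Fin n)) : Matrix (Fin n) (Fin n) ℝ :=
  fun i j => if j = π i then 1 else 0

lemma permMatrix_conj {n : ℕ} (π : Equiv.Perm (Fin n)) (A : Matrix (Fin n) (Fin n) ℝ) :
    permMatrix π * A * (permMatrix π)ᵀ = A.submatrix π π := by
  ext i j
  simp only [Matrix.mul_apply, Matrix.transpose_apply, permMatrix, Matrix.submatrix_apply]
  simp [ite_mul, mul_ite]

lemma permMatrix_mulVec {n : ℕ} (π : Equiv.Perm (Fin n)) (v : Fin n → ℝ) :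
    permMatrix π *ᵥ v = fun i => v (π i) := by
  ext i
  simp [Matrix.mulVec, dotProduct, permMatrix]

/-- The vertex-labeling split criterion of TREE-G is permutation-equivariant:
it holds at vertex `i` of the relabeled graph iff it holds at vertex `π i`
of the original graph. -/
theorem split_criterion_perm_equivariant (n : ℕ) (A M : Matrix (Fin n) (Fin n) ℝ)
    (v : Fin n → ℝ) (θ : ℝ) (π : Equiv.Perm (Fin n)) (d : ℕ) (i : Fin n) :
    ((Matrix.hadamard ((permMatrix π * A * (permMatrix π)ᵀ) ^ d)
        (permMatrix π * M * (permMatrix π)ᵀ)) *ᵥ (permMatrix π *ᵥ v)) i > θ ↔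
      ((Matrix.hadamard (A ^ d) M) *ᵥ v) (π i) > θ := by
  have hpow : (permMatrix π * A * (permMatrix π)ᵀ) ^ d = (A ^ d).submatrix π π := by
    rw [permMatrix_conj]
    induction d with
    | zero => simp [Matrix.submatrix_one_equiv]
    | succ k ih => rw [pow_succ, pow_succ, ih, Matrix.submatrix_mul_equiv]
  rw [hpow, permMatrix_conj, permMatrix_mulVec]
  have : (Matrix.hadamard ((A ^ d).submatrix π π) (M.submatrix π π)) *ᵥ
      (fun i => v (π i)) = fun i => ((Matrix.hadamard (A ^ d) M) *ᵥ v) (π i) := by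
    ext i
    simp only [Matrix.mulVec, dotProduct, Matrix.hadamard_apply,
      Matrix.submatrix_apply]
    exact Equiv.sum_comp π fun j => (A ^ d) (π i) j * M (π i) j * v j
  rw [this]
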